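/- Let A and B be groups and H a group embedding into both A and B. Then Tor₁(A *_H B) equals the normal closure in A *_H B of Tor(A) ∪ Tor(B), where Tor(A) and Tor(B) are the torsion elements of A and B viewed inside the amalgamated free product. -/

import Mathlib

open Monoid

universe u

/-- The family `{A, B}` indexed by `Bool` (`true ↦ A`, `false ↦ B`). -/
instance famGroup (A B : Type u) [Group A] [Group B] : ∀ b : Bool, Group (cond b A B)
  | true => ‹Group A›
  | false => ‹Group B›

/-- The pair of embeddings `H →* A`, `H →* B` as a `Bool`-indexed family. -/
def amalgMaps {A B H : Type u} [Group A] [Group B] [Group H]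
    (φA : H →* A) (φB : H →* B) : ∀ b : Bool, H →* cond b A B
  | true => φA
  | false => φB

/-!
Write an element of the amalgamated product as `base h` times a reduced word; conjugating `base h`
to the end and absorbing it into the last letter leaves a reduced word in the same conjugacy class.
If the first and last letters of a nonempty reduced word lie in different factors, all its powers
are again nonempty reduced words, hence nontrivial by the normal form theorem, so it has infinite
order. Otherwise conjugating by the first letter merges it into the last one and shortens the word.
By induction on the length, every torsion element is conjugate to a torsion element of a factor.
-/

theorem Subgroup.IsComplement.eq_one_of_mem_of_mem {G : Type*} [Group G] {S T : Set G}
    (hST : Subgroup.IsComplement S T) (hS : 1 ∈ S) (hT : 1 ∈ T) {g : G} (hgS : g ∈ S)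
    (hgT : g ∈ T) : g = 1 :=
  congrArg Subtype.val <| (hST.equiv_fst_eq_self_of_mem_of_one_mem hT hgS).symm.trans
    (hST.equiv_fst_eq_one_of_mem_of_one_mem hS hgT)

namespace Monoid.PushoutI

open CoprodI

variable {ι H : Type*} {G : ι → Type*} [Group H] [∀ i, Group (G i)] {φ : ∀ i, H →* G i}

variable (φ) in
def listProd (l : List (Σ i, G i)) : PushoutI φ :=
  (l.map fun p => of p.1 p.2).prod

@[simp]
theorem listProd_nil : listProd φ [] = 1 := rfl

@[simp]
theorem listProd_cons (p : Σ i, G i) (l : List (Σ i, G i)) :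
    listProd φ (p :: l) = of p.1 p.2 * listProd φ l := by
  simp [listProd]

@[simp]
theorem listProd_append (l₁ l₂ : List (Σ i, G i)) :
    listProd φ (l₁ ++ l₂) = listProd φ l₁ * listProd φ l₂ := by
  simp [listProd]

@[simp]
theorem listProd_flatten_replicate (n : ℕ) (l : List (Σ i, G i)) :
    listProd φ (List.replicate n l).flatten = listProd φ l ^ n := by
  simp [listProd, List.map_flatten, List.prod_flatten]

theorem ofCoprodI_word_prod (w : Word G) : ofCoprodI (φ := φ) w.prod = listProd φ w.toList := by
  simp [Word.prod, listProd, map_list_prod, Function.comp_def]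

variable (φ) in
def IsReducedList (l : List (Σ i, G i)) : Prop :=
  (∀ p ∈ l, p.2 ∉ (φ p.1).range) ∧ l.IsChain fun p q => p.1 ≠ q.1

theorem IsReducedList.of_cons {p : Σ i, G i} {l : List (Σ i, G i)}
    (hl : IsReducedList φ (p :: l)) : IsReducedList φ l :=
  ⟨fun q hq => hl.1 q (List.mem_cons_of_mem p hq), hl.2.tail⟩

theorem isReducedList_append_singleton {l : List (Σ i, G i)} {p : Σ i, G i} :
    IsReducedList φ (l ++ [p]) ↔
      IsReducedList φ l ∧ p.2 ∉ (φ p.1).range ∧ ∀ q ∈ l.getLast?, q.1 ≠ p.1 := by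
  simp only [IsReducedList, List.mem_append, List.mem_singleton, List.isChain_append,
    List.isChain_singleton, List.head?_cons, Option.mem_def, Option.some.injEq, forall_eq']
  grind

theorem IsReducedList.listProd_ne_one (hφ : ∀ i, Function.Injective (φ i))
    {l : List (Σ i, G i)} (hl : IsReducedList φ l) (hne : l ≠ []) : listProd φ l ≠ 1 := by
  intro h1
  let w : Word G := ⟨l, fun p hp hp1 => hl.1 p hp (hp1 ▸ one_mem _), hl.2⟩
  have hw : w = .empty :=
    Reduced.eq_empty_of_mem_range hφ hl.1 ⟨1, by rw [map_one, ofCoprodI_word_prod, h1]⟩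
  exact hne (congrArg Word.toList hw)

theorem IsReducedList.flatten_replicate {l : List (Σ i, G i)} (hl : IsReducedList φ l)
    (hcyc : ∀ p ∈ l.getLast?, ∀ q ∈ l.head?, p.1 ≠ q.1) (n : ℕ) :
    IsReducedList φ (List.replicate n l).flatten := by
  rcases eq_or_ne l [] with rfl | hne
  · simp [IsReducedList]
  refine ⟨fun p hp => ?_, ?_⟩
  · obtain ⟨l', hl', hp⟩ := List.mem_flatten.1 hp
    exact hl.1 p (List.eq_of_mem_replicate hl' ▸ hp)
  · rw [List.isChain_flatten (by simp [hne.symm])]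
    exact ⟨fun l' hl' => List.eq_of_mem_replicate hl' ▸ hl.2,
      List.isChain_replicate_of_rel n hcyc⟩

theorem IsReducedList.not_isOfFinOrder (hφ : ∀ i, Function.Injective (φ i))
    {l : List (Σ i, G i)} (hl : IsReducedList φ l) (hne : l ≠ [])
    (hcyc : ∀ p ∈ l.getLast?, ∀ q ∈ l.head?, p.1 ≠ q.1) : ¬IsOfFinOrder (listProd φ l) := by
  rw [isOfFinOrder_iff_pow_eq_one]
  rintro ⟨n, hn, hpow⟩
  refine (hl.flatten_replicate hcyc n).listProd_ne_one hφ ?_ (by simpa using hpow)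
  simp [hne, hn.ne']

theorem IsReducedList.exists_eq_mul_base {l : List (Σ i, G i)} (hl : IsReducedList φ l)
    (hne : l ≠ []) (h : H) :
    ∃ l', IsReducedList φ l' ∧ l' ≠ [] ∧ l'.length = l.length ∧
      listProd φ l' = listProd φ l * base φ h := by
  obtain ⟨m, r, rfl⟩ := List.eq_nil_or_concat' l |>.resolve_left hne
  rw [isReducedList_append_singleton] at hl
  refine ⟨m ++ [⟨r.1, r.2 * φ r.1 h⟩], ?_, by simp, by simp, ?_⟩
  · rwa [isReducedList_append_singleton, (φ r.1).range.mul_mem_cancel_right ⟨h, rfl⟩]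
  · simp [of_apply_eq_base, mul_assoc]

theorem IsReducedList.exists_isConj_shorter {p q : Σ i, G i} {m : List (Σ i, G i)}
    (hl : IsReducedList φ (p :: m ++ [q])) (hpq : p.1 = q.1) :
    ∃ l', IsReducedList φ l' ∧ l' ≠ [] ∧ l'.length ≤ m.length + 1 ∧
      IsConj (listProd φ (p :: m ++ [q])) (listProd φ l') := by
  obtain ⟨i, a⟩ := p
  obtain ⟨j, b⟩ := q
  obtain rfl : i = j := hpq
  rw [isReducedList_append_singleton] at hl
  obtain ⟨ham, -, hlast⟩ := hl
  have hm := ham.of_cons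
  have hmne : m ≠ [] := by
    rintro rfl
    exact hlast ⟨i, a⟩ rfl rfl
  have hconj : IsConj (listProd φ (⟨i, a⟩ :: m ++ [⟨i, b⟩])) (listProd φ m * of i (b * a)) :=
    isConj_iff.2 ⟨(of i a)⁻¹, by simp [mul_assoc]⟩
  by_cases hba : b * a ∈ (φ i).range
  · obtain ⟨h, hh⟩ := hba
    obtain ⟨l', hl', hne', hlen, hprod⟩ := hm.exists_eq_mul_base hmne h
    refine ⟨l', hl', hne', hlen.le.trans m.length.le_succ, ?_⟩
    rwa [hprod, ← of_apply_eq_base φ i, hh]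
  · refine ⟨m ++ [⟨i, b * a⟩], ?_, by simp, by simp, by simpa using hconj⟩
    rw [isReducedList_append_singleton]
    refine ⟨hm, hba, fun r hr => hlast r ?_⟩
    rwa [List.getLast?_cons_of_ne_nil hmne]

theorem IsReducedList.exists_isConj_of_isOfFinOrder (hφ : ∀ i, Function.Injective (φ i))
    {l : List (Σ i, G i)} (hl : IsReducedList φ l) (hne : l ≠ [])
    (hfin : IsOfFinOrder (listProd φ l)) :
    ∃ (i : ι) (x : G i), IsOfFinOrder x ∧ IsConj (of i x) (listProd φ l) := by
  induction hlen : l.length using Nat.strong_induction_on generalizing l with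
  | _ n ih =>
  rcases l with _ | ⟨p, t⟩
  · exact absurd rfl hne
  rcases t.eq_nil_or_concat' with rfl | ⟨m, q, rfl⟩
  · refine ⟨p.1, p.2, ?_, by simpa only [listProd_cons, listProd_nil, mul_one] using .refl _⟩
    exact (of_injective hφ p.1).isOfFinOrder_iff.1 (by simpa using hfin)
  by_cases hpq : p.1 = q.1
  · obtain ⟨l', hl', hne', hlen', hconj⟩ := hl.exists_isConj_shorter hpq
    have hshorter : l'.length < n := by
      simp only [List.length_cons, List.length_append] at hlen
      omega
    obtain ⟨i, x, hx, hc⟩ := ih l'.length hshorter hl' hne' (hconj.isOfFinOrder hfin) rfl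
    exact ⟨i, x, hx, hc.trans hconj.symm⟩
  · refine absurd hfin (hl.not_isOfFinOrder hφ (by simp) ?_)
    rw [← List.cons_append, List.getLast?_concat]
    simpa using Ne.symm hpq

theorem exists_base_mul_listProd_eq (hφ : ∀ i, Function.Injective (φ i)) (g : PushoutI φ) :
    ∃ (h : H) (l : List (Σ i, G i)), IsReducedList φ l ∧ base φ h * listProd φ l = g := by
  classical
  obtain ⟨d⟩ := NormalWord.transversal_nonempty φ hφ
  let w : NormalWord d := NormalWord.equiv g
  refine ⟨w.head, w.toList, ⟨fun p hp hpH => w.ne_one p hp ?_, w.chain_ne⟩, ?_⟩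
  · exact (d.compl p.1).eq_one_of_mem_of_mem (one_mem _) (d.one_mem p.1) hpH
      (w.normalized p.1 p.2 hp)
  · rw [← ofCoprodI_word_prod]
    exact NormalWord.equiv.symm_apply_apply g

theorem exists_isConj_of_isOfFinOrder [Nonempty ι] (hφ : ∀ i, Function.Injective (φ i))
    {g : PushoutI φ} (hg : IsOfFinOrder g) :
    ∃ (i : ι) (x : G i), IsOfFinOrder x ∧ IsConj (of i x) g := by
  obtain ⟨h, l, hl, rfl⟩ := exists_base_mul_listProd_eq hφ g
  rcases eq_or_ne l [] with rfl | hne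
  · let i := Classical.arbitrary ι
    have hbase : of i (φ i h) = base φ h * listProd φ [] := by simp [of_apply_eq_base]
    refine ⟨i, φ i h, ?_, hbase ▸ IsConj.refl _⟩
    exact (of_injective hφ i).isOfFinOrder_iff.1 (hbase ▸ hg)
  · obtain ⟨l', hl', hne', -, hprod⟩ := hl.exists_eq_mul_base hne h
    have hconj : IsConj (base φ h * listProd φ l) (listProd φ l') :=
      isConj_iff.2 ⟨(base φ h)⁻¹, by simp [hprod]⟩
    obtain ⟨i, x, hx, hc⟩ := hl'.exists_isConj_of_isOfFinOrder hφ hne' (hconj.isOfFinOrder hg)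
    exact ⟨i, x, hx, hc.trans hconj.symm⟩

end Monoid.PushoutI

/-- Let `A`, `B` be groups and `H` a group embedding into both `A` and `B` (via injective
homomorphisms `φA`, `φB`).  Then `Tor₁(A *_H B)`, the normal closure of the set of torsion
elements of the amalgamated free product `A *_H B`, equals the normal closure in `A *_H B`
of `Tor(A) ∪ Tor(B)` (the torsion elements of the two factors viewed inside `A *_H B` under
the natural maps). -/
theorem tor_one_amalgamated_product
    (A B H : Type u) [Group A] [Group B] [Group H]
    (φA : H →* A) (φB : H →* B)
    (hA : Function.Injective φA) (hB : Function.Injective φB) :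
    Subgroup.normalClosure
        {g : PushoutI (amalgMaps φA φB) | IsOfFinOrder g} =
      Subgroup.normalClosure
        ((PushoutI.of (φ := amalgMaps φA φB) true '' {a : A | IsOfFinOrder a}) ∪
          (PushoutI.of (φ := amalgMaps φA φB) false '' {b : B | IsOfFinOrder b})) := by
  have hφ : ∀ b, Function.Injective (amalgMaps φA φB b)
    | true => hA
    | false => hB
  refine le_antisymm (Subgroup.normalClosure_le_normal fun g hg => ?_)
    (Subgroup.normalClosure_mono ?_)
  · obtain ⟨i, x, hx, hc⟩ := PushoutI.exists_isConj_of_isOfFinOrder hφ hg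
    obtain ⟨c, rfl⟩ := isConj_iff.1 hc
    refine Subgroup.normalClosure_normal.conj_mem _ (Subgroup.subset_normalClosure ?_) c
    cases i
    exacts [Or.inr ⟨x, hx, rfl⟩, Or.inl ⟨x, hx, rfl⟩]
  · rintro _ (⟨x, hx, rfl⟩ | ⟨x, hx, rfl⟩) <;> exact MonoidHom.isOfFinOrder _ hx
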